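/- Let A be a filter in an inverse semigroup S and let a ∈ A. Then A equals the upward closure of a·d(A), where d(A) = (A⁻¹A)↑ is the upward closure of {x⁻¹y : x, y ∈ A}. -/
import Mathlib


/-- An inverse semigroup. -/
class InverseSemigroup (S : Type*) extends Semigroup S where
  sinv : S → S
  mul_sinv_mul : ∀ a : S, a * sinv a * a = a
  sinv_mul_sinv : ∀ a : S, sinv a * a * sinv a = sinv a
  idem_comm : ∀ e f : S, e * e = e → f * f = f → e * f = f * e

namespace InverseSemigroup

variable {S : Type*} [InverseSemigroup S]

/-- The natural partial order: `a ≤ b` iff `a = e * b` for some idempotent `e`. -/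
def nle (a b : S) : Prop := ∃ e : S, e * e = e ∧ a = e * b

/-- A filter: nonempty, downward directed and upward closed with respect to the
natural partial order. -/
def IsFilter (A : Set S) : Prop :=
  A.Nonempty ∧ (∀ x ∈ A, ∀ y ∈ A, ∃ z ∈ A, nle z x ∧ nle z y) ∧
    (∀ x ∈ A, ∀ y : S, nle x y → y ∈ A)

/-- `d(A) = (A⁻¹A)↑`: the upward closure of `{x⁻¹ u : x, u ∈ A}`. -/
def dOf (A : Set S) : Set S := {t | ∃ x ∈ A, ∃ u ∈ A, nle (sinv x * u) t}

lemma idem_mul {e f : S} (he : e * e = e) (hf : f * f = f) :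
    (e * f) * (e * f) = e * f := by
  calc (e * f) * (e * f) = e * (f * e) * f := by simp [mul_assoc]
    _ = e * (e * f) * f := by rw [← idem_comm e f he hf]
    _ = (e * e) * (f * f) := by simp [mul_assoc]
    _ = e * f := by rw [he, hf]

lemma mul_sinv_idem (a : S) : (a * sinv a) * (a * sinv a) = a * sinv a := by
  calc (a * sinv a) * (a * sinv a) = (a * sinv a * a) * sinv a := by
        simp [mul_assoc]
    _ = a * sinv a := by rw [mul_sinv_mul]

lemma sinv_mul_idem (a : S) : (sinv a * a) * (sinv a * a) = sinv a * a := by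
  calc (sinv a * a) * (sinv a * a) = (sinv a * a * sinv a) * a := by
        simp [mul_assoc]
    _ = sinv a * a := by rw [sinv_mul_sinv]

lemma sinv_unique {a x : S} (h1 : a * x * a = a) (h2 : x * a * x = x) :
    x = sinv a := by
  have hba : (x * a) * (x * a) = x * a := by
    calc (x * a) * (x * a) = x * (a * x * a) := by simp [mul_assoc]
      _ = x * a := by rw [h1]
  have hca : (sinv a * a) * (sinv a * a) = sinv a * a := sinv_mul_idem a
  have hb : x = sinv a * (a * x) := by
    calc x = x * a * x := h2.symm
      _ = x * (a * sinv a * a) * x := by rw [mul_sinv_mul]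
      _ = (x * a) * (sinv a * a) * x := by simp [mul_assoc]
      _ = (sinv a * a) * (x * a) * x := by rw [idem_comm _ _ hba hca]
      _ = sinv a * (a * (x * a * x)) := by simp [mul_assoc]
      _ = sinv a * (a * x) := by rw [h2]
  have hab : (a * x) * (a * x) = a * x := by
    calc (a * x) * (a * x) = (a * x * a) * x := by simp [mul_assoc]
      _ = a * x := by rw [h1]
  have hac : (a * sinv a) * (a * sinv a) = a * sinv a := mul_sinv_idem a
  have hc : sinv a = sinv a * (a * x) := by
    calc sinv a = sinv a * a * sinv a := (sinv_mul_sinv a).symm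
      _ = sinv a * (a * x * a) * sinv a := by rw [h1]
      _ = sinv a * ((a * x) * (a * sinv a)) := by simp [mul_assoc]
      _ = sinv a * ((a * sinv a) * (a * x)) := by rw [idem_comm _ _ hab hac]
      _ = (sinv a * a * sinv a) * (a * x) := by simp [mul_assoc]
      _ = sinv a * (a * x) := by rw [sinv_mul_sinv]
  rw [hb, ← hc]

lemma sinv_mul' (a b : S) : sinv (a * b) = sinv b * sinv a := by
  symm
  apply sinv_unique
  · calc a * b * (sinv b * sinv a) * (a * b)
        = a * ((b * sinv b) * (sinv a * a)) * b := by simp [mul_assoc]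
      _ = a * ((sinv a * a) * (b * sinv b)) * b := by
          rw [idem_comm _ _ (mul_sinv_idem b) (sinv_mul_idem a)]
      _ = (a * sinv a * a) * (b * sinv b * b) := by simp [mul_assoc]
      _ = a * b := by rw [mul_sinv_mul, mul_sinv_mul]
  · calc sinv b * sinv a * (a * b) * (sinv b * sinv a)
        = sinv b * ((sinv a * a) * (b * sinv b)) * sinv a := by simp [mul_assoc]
      _ = sinv b * ((b * sinv b) * (sinv a * a)) * sinv a := by
          rw [idem_comm _ _ (sinv_mul_idem a) (mul_sinv_idem b)]
      _ = (sinv b * b * sinv b) * (sinv a * a * sinv a) := by simp [mul_assoc]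
      _ = sinv b * sinv a := by rw [sinv_mul_sinv, sinv_mul_sinv]

lemma sinv_idem {e : S} (he : e * e = e) : sinv e = e := by
  symm
  apply sinv_unique
  · rw [he, he]
  · rw [he, he]

lemma nle_refl (a : S) : nle a a :=
  ⟨a * sinv a, mul_sinv_idem a, (mul_sinv_mul a).symm⟩

lemma nle_trans {a b c : S} (h1 : nle a b) (h2 : nle b c) : nle a c := by
  obtain ⟨e, he, hae⟩ := h1
  obtain ⟨f, hf, hbf⟩ := h2
  exact ⟨e * f, idem_mul he hf, by rw [hae, hbf, mul_assoc]⟩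

lemma nle_right {a b : S} : nle a b ↔ ∃ f : S, f * f = f ∧ a = b * f := by
  constructor
  · rintro ⟨e, he, rfl⟩
    refine ⟨sinv b * e * b, ?_, ?_⟩
    · calc sinv b * e * b * (sinv b * e * b)
          = sinv b * ((e * (b * sinv b)) * e) * b := by simp [mul_assoc]
        _ = sinv b * (((b * sinv b) * e) * e) * b := by
            rw [idem_comm _ _ he (mul_sinv_idem b)]
        _ = sinv b * (b * sinv b) * (e * e) * b := by simp [mul_assoc]
        _ = (sinv b * b * sinv b) * (e * b) := by rw [he]; simp [mul_assoc]
        _ = sinv b * e * b := by rw [sinv_mul_sinv]; simp [mul_assoc]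
    · calc e * b = e * (b * sinv b * b) := by rw [mul_sinv_mul]
        _ = (e * (b * sinv b)) * b := by simp [mul_assoc]
        _ = ((b * sinv b) * e) * b := by rw [idem_comm _ _ he (mul_sinv_idem b)]
        _ = b * (sinv b * e * b) := by simp [mul_assoc]
  · rintro ⟨f, hf, rfl⟩
    refine ⟨b * f * sinv b, ?_, ?_⟩
    · calc b * f * sinv b * (b * f * sinv b)
          = b * ((f * (sinv b * b)) * f) * sinv b := by simp [mul_assoc]
        _ = b * (((sinv b * b) * f) * f) * sinv b := by
            rw [idem_comm _ _ hf (sinv_mul_idem b)]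
        _ = b * (sinv b * b) * (f * f) * sinv b := by simp [mul_assoc]
        _ = (b * sinv b * b) * (f * sinv b) := by rw [hf]; simp [mul_assoc]
        _ = b * f * sinv b := by rw [mul_sinv_mul]; simp [mul_assoc]
    · calc b * f = (b * sinv b * b) * f := by rw [mul_sinv_mul]
        _ = b * ((sinv b * b) * f) := by simp [mul_assoc]
        _ = b * (f * (sinv b * b)) := by rw [idem_comm _ _ (sinv_mul_idem b) hf]
        _ = (b * f * sinv b) * b := by simp [mul_assoc]

lemma nle_mul {a b c d : S} (h1 : nle a b) (h2 : nle c d) :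
    nle (a * c) (b * d) := by
  obtain ⟨f, hf, haf⟩ := nle_right.mp h1
  obtain ⟨e, he, hce⟩ := h2
  have hfe : (f * e) * (f * e) = f * e := idem_mul hf he
  refine nle_right.mpr ⟨sinv d * (f * e) * d, ?_, ?_⟩
  · calc sinv d * (f * e) * d * (sinv d * (f * e) * d)
        = sinv d * (((f * e) * (d * sinv d)) * (f * e)) * d := by simp [mul_assoc]
      _ = sinv d * (((d * sinv d) * (f * e)) * (f * e)) * d := by
          rw [idem_comm _ _ hfe (mul_sinv_idem d)]
      _ = sinv d * (d * sinv d) * ((f * e) * (f * e)) * d := by simp [mul_assoc]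
      _ = (sinv d * d * sinv d) * ((f * e) * d) := by rw [hfe]; simp [mul_assoc]
      _ = sinv d * (f * e) * d := by rw [sinv_mul_sinv]; simp [mul_assoc]
  · calc a * c = b * f * (e * d) := by rw [haf, hce]
      _ = b * ((f * e) * d) := by simp [mul_assoc]
      _ = b * ((f * e) * (d * sinv d * d)) := by rw [mul_sinv_mul]
      _ = b * (((f * e) * (d * sinv d)) * d) := by simp [mul_assoc]
      _ = b * (((d * sinv d) * (f * e)) * d) := by
          rw [idem_comm _ _ hfe (mul_sinv_idem d)]
      _ = b * d * (sinv d * (f * e) * d) := by simp [mul_assoc]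

lemma nle_sinv {a b : S} (h : nle a b) : nle (sinv a) (sinv b) := by
  obtain ⟨e, he, rfl⟩ := h
  refine nle_right.mpr ⟨e, he, ?_⟩
  rw [sinv_mul', sinv_idem he]

end InverseSemigroup

open InverseSemigroup

/-- A filter `A` equals the upward closure of `a · d(A)` for any `a ∈ A`. -/
theorem stmt14 {S : Type*} [InverseSemigroup S] (A : Set S) (hA : IsFilter A)
    {a : S} (ha : a ∈ A) :
    A = {y : S | ∃ t ∈ dOf A, nle (a * t) y} := by
  obtain ⟨-, hdir, hup⟩ := hA
  ext y
  constructor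
  · intro hy
    refine ⟨sinv a * y, ⟨a, ha, y, hy, nle_refl _⟩, ?_⟩
    exact ⟨a * sinv a, mul_sinv_idem a, by rw [mul_assoc]⟩
  · rintro ⟨t, ⟨x, hx, u, hu, hle⟩, hay⟩
    obtain ⟨z, hz, hzx, hza⟩ := hdir x hx a ha
    obtain ⟨w, hw, hwz, hwu⟩ := hdir z hz u hu
    have hwx : nle w x := nle_trans hwz hzx
    have hwa : nle w a := nle_trans hwz hza
    have h1 : nle (w * (sinv w * w)) (a * (sinv x * u)) :=
      nle_mul hwa (nle_mul (nle_sinv hwx) hwu)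
    have h2 : nle (a * (sinv x * u)) (a * t) := nle_mul (nle_refl a) hle
    have hw' : w * (sinv w * w) = w := by rw [← mul_assoc, mul_sinv_mul]
    rw [hw'] at h1
    exact hup w hw y (nle_trans h1 (nle_trans h2 hay))
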